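/- arXiv:0901.1560 — 4 statements merged into one kernel-verified Lean document; each statement's English description precedes it below -/
import Mathlib

section
/- Let R be an arithmetical ring such that every finitely generated R-module has finite Goldie dimension. Then for every ideal A of R, the quotient ring R/A has only finitely many minimal prime ideals. -/
universe u

/-- A ring is *coherent* if every finitely generated ideal is finitely presented. -/
def IsCoherentRing (R : Type u) [CommRing R] : Prop :=
  ∀ I : Ideal R, I.FG → Module.FinitePresentation R I

/-- A ring is *semicoherent* if `Hom_R(E, F)` is (isomorphic to) a submodule of a flat module
for every pair of injective modules `E`, `F`. -/
def IsSemicoherentRing (R : Type u) [CommRing R] : Prop :=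
  ∀ (E F : Type u) [AddCommGroup E] [Module R E] [AddCommGroup F] [Module R F],
    Module.Injective R E → Module.Injective R F →
      ∃ G : ModuleCat.{u} R, Module.Flat R G ∧
        ∃ i : (E →ₗ[R] F) →ₗ[R] G, Function.Injective i

/-- An `R`-module `E` is *FP-injective* if `Ext¹_R(F, E) = 0` for every finitely
presented `R`-module `F`. -/
def IsFPInjective (R : Type u) [CommRing R] (E : Type u) [AddCommGroup E] [Module R E] : Prop :=
  ∀ (F : Type u) [AddCommGroup F] [Module R F], Module.FinitePresentation R F →
    Subsingleton (((Ext R (ModuleCat.{u} R) 1).obj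
      (Opposite.op (ModuleCat.of R F))).obj (ModuleCat.of R E))

/-- A ring is an *IF-ring* if every injective module over it is flat. -/
def IsIFRing (R : Type u) [CommRing R] : Prop :=
  ∀ (M : Type u) [AddCommGroup M] [Module R M], Module.Injective R M → Module.Flat R M

/-- `f : M →ₗ[R] E` exhibits `E` as an injective hull of `M`: `E` is injective and
`f` embeds `M` as an essential submodule of `E`. -/
def IsInjectiveHull (R : Type u) [CommRing R] (M E : Type u) [AddCommGroup M] [Module R M]
    [AddCommGroup E] [Module R E] (f : M →ₗ[R] E) : Prop :=
  Module.Injective R E ∧ Function.Injective f ∧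
    ∀ N : Submodule R E, N ≠ ⊥ → N ⊓ LinearMap.range f ≠ ⊥

/-- A module is indecomposable if it is nonzero and not the direct sum
of two nonzero submodules. -/
def IsIndecomposableModule (R : Type u) [CommRing R] (M : Type u) [AddCommGroup M]
    [Module R M] : Prop :=
  Nontrivial M ∧ ∀ A B : Submodule R M, IsCompl A B → A = ⊥ ∨ B = ⊥

/-- A module has *finite Goldie dimension* if its injective hull is a finite direct
sum of indecomposable injective modules. -/
def HasFiniteGoldieDimension (R : Type u) [CommRing R] (M : Type u) [AddCommGroup M]
    [Module R M] : Prop :=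
  ∃ (E : ModuleCat.{u} R) (f : M →ₗ[R] E), IsInjectiveHull R M E f ∧
    ∃ (n : ℕ) (D : Fin n → Submodule R E), DirectSum.IsInternal D ∧
      ∀ i, Module.Injective R (D i) ∧ IsIndecomposableModule R (D i)

/-- A commutative ring is a *valuation ring* (uniserial) if its ideals are totally
ordered by inclusion. -/
def IsChainRing (R : Type u) [CommRing R] : Prop :=
  ∀ I J : Ideal R, I ≤ J ∨ J ≤ I

/-- A commutative ring is *arithmetical* if all its localizations at maximal ideals are
valuation rings. -/
def IsArithmetical (R : Type u) [CommRing R] : Prop :=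
  ∀ (P : Ideal R) (hP : P.IsMaximal),
    haveI := hP.isPrime
    IsChainRing (Localization.AtPrime P)

/-- An `R`-module `M` is *finitely injective* if every homomorphism `A → M` from a finitely
generated submodule `A` of an arbitrary module `B` extends to `B`. -/
def IsFinitelyInjective (R : Type u) [CommRing R] (M : Type u) [AddCommGroup M]
    [Module R M] : Prop :=
  ∀ (B : Type u) [AddCommGroup B] [Module R B] (A : Submodule R B), A.FG →
    ∀ f : A →ₗ[R] M, ∃ g : B →ₗ[R] M, ∀ a : A, g a = f a

/-- A domain has *finite character* if every nonzero element lies in only finitely many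
maximal ideals. -/
def FiniteCharacter (R : Type u) [CommRing R] : Prop :=
  ∀ r : R, r ≠ 0 → {P : Ideal R | P.IsMaximal ∧ r ∈ P}.Finite

/-!
Distinct minimal primes `P₁, …, Pₘ` of a reduced ring admit elements `xᵢ ∉ Pᵢ` with `xᵢ xⱼ = 0`
for `i ≠ j` (every element of `Pⱼ` becomes nilpotent at the localization at `Pⱼ`); the cyclic
submodules `R xᵢ` are then independent, because an element of `R xᵢ ∩ Σⱼ≠ᵢ R xⱼ` squares to zero.
Apply this to the reduced cyclic module `R ⧸ √A`, which has the minimal primes of `R ⧸ A`.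

It embeds into a sum of `n` indecomposable injectives, and these are uniform (two nonzero
submodules meet). In a modular lattice, the join of `n` independent uniform elements `V₁, …, Vₙ`
contains no `n + 1` independent nonzero elements, by induction on `n` with `w = V₂ ⊔ ⋯ ⊔ Vₙ`:
either all members of the family meet `w`, or one member `b` misses `w`, replaces `V₁`, and the
remaining members are carried into `w` along `b`.
-/
section Lattice

variable {α : Type*} [CompleteLattice α]

theorem exists_le_maximal_disjoint [IsCompactlyGenerated α] {a b : α} (h : Disjoint b a) :
    ∃ c, b ≤ c ∧ Maximal (Disjoint · a) c :=
  zorn_le_nonempty₀ {c | Disjoint c a}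
    (fun s hs hchain _ _ => ⟨sSup s, hchain.directedOn.disjoint_sSup_left.2 hs,
      fun _ => le_sSup⟩) b h

def IsUniform (a : α) : Prop :=
  ∀ b ≤ a, ∀ c ≤ a, Disjoint b c → b = ⊥ ∨ c = ⊥

variable [IsModularLattice α] {u w x : α}

theorem sup_inf_eq_of_disjoint {y b : α} (h : Disjoint x y) (hb : b ≤ y) : (x ⊔ b) ⊓ y = b := by
  rw [sup_comm, sup_inf_assoc_of_le x hb, h.eq_bot, sup_bot_eq]

theorem eq_bot_of_le_sup_of_disjoint_sup (hx : x ≤ u ⊔ w) (hxw : Disjoint x w)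
    (h : Disjoint (x ⊔ w) u) : x = ⊥ := by
  have : x ⊔ w = w := calc
    x ⊔ w = (x ⊔ w) ⊓ (u ⊔ w) := (inf_eq_left.2 (sup_le hx le_sup_right)).symm
    _ = (x ⊔ w) ⊓ u ⊔ w := (inf_sup_assoc_of_le u le_sup_right).symm
    _ = w := by rw [h.eq_bot, bot_sup_eq]
  exact hxw.eq_bot_of_le (this ▸ le_sup_left)

theorem IsUniform.not_disjoint_sup (hu : IsUniform u) (huw : Disjoint u w) {b : α}
    (hb : b ≤ u ⊔ w) (hb0 : b ≠ ⊥) (hbw : Disjoint b w)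
    (hx : x ≤ u ⊔ w) (hx0 : x ≠ ⊥) : ¬ Disjoint x (b ⊔ w) := by
  intro hxb
  have hxw : Disjoint x w := hxb.mono_right le_sup_right
  have hdisj : Disjoint ((x ⊔ w) ⊓ u) ((b ⊔ w) ⊓ u) := by
    rw [disjoint_iff, inf_inf_inf_comm, sup_inf_eq_of_disjoint hxb le_sup_right, inf_idem]
    exact huw.symm.eq_bot
  rcases hu _ inf_le_right _ inf_le_right hdisj with h | h
  · exact hx0 (eq_bot_of_le_sup_of_disjoint_sup hx hxw (disjoint_iff.2 h))
  · exact hb0 (eq_bot_of_le_sup_of_disjoint_sup hb hbw (disjoint_iff.2 h))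

theorem IsUniform.exists_iSupIndep_le {ι : Type*} (hu : IsUniform u) (huw : Disjoint u w)
    {C : ι → α} (hC : iSupIndep C) (hC0 : ∀ j, C j ≠ ⊥) (hCuw : ∀ j, C j ≤ u ⊔ w)
    {j₀ : ι} (hj₀ : Disjoint (C j₀) w) :
    ∃ D : {j // j ≠ j₀} → α, iSupIndep D ∧ (∀ j, D j ≠ ⊥) ∧ ∀ j, D j ≤ w := by
  set b := C j₀
  -- project the part of `C j` inside `b ⊔ w` onto `w` along `b`
  refine ⟨fun j => (C j ⊓ (b ⊔ w) ⊔ b) ⊓ w, fun j => ?_, fun j hj => ?_, fun j => inf_le_right⟩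
  · set T := ⨆ (i) (_ : i ≠ (j : ι)), C i
    have hbT : b ≤ T := le_iSup₂_of_le j₀ (Ne.symm j.2) le_rfl
    have hdisj : Disjoint ((C j ⊔ b) ⊓ w) T := by
      rw [disjoint_iff, inf_right_comm, sup_inf_eq_of_disjoint (hC j) hbT]
      exact hj₀.eq_bot
    refine hdisj.mono (inf_le_inf_right _ (sup_le_sup_right inf_le_left _)) (iSup₂_le ?_)
    exact fun k hk => inf_le_left.trans (sup_le ((inf_le_left.trans
      (le_iSup₂_of_le (k : ι) (Subtype.coe_injective.ne hk) le_rfl))) hbT)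
  · have hc0 : C j ⊓ (b ⊔ w) ≠ ⊥ := fun h => hu.not_disjoint_sup huw (hCuw j₀) (hC0 j₀) hj₀
      (hCuw j) (hC0 j) (disjoint_iff.2 h)
    refine hc0 (eq_bot_of_le_sup_of_disjoint_sup (u := w) ?_ ?_ (disjoint_iff.2 hj))
    · exact inf_le_right.trans (sup_comm b w).le
    · exact (hC.pairwiseDisjoint j.2).mono_left inf_le_left

theorem card_le_card_of_iSupIndep_of_isUniform {ι κ : Type*} [Fintype ι] [Fintype κ]
    {V : κ → α} (hV : iSupIndep V) (hVu : ∀ i, IsUniform (V i))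
    {C : ι → α} (hC : iSupIndep C) (hC0 : ∀ j, C j ≠ ⊥) (hCV : ∀ j, C j ≤ ⨆ i, V i) :
    Fintype.card ι ≤ Fintype.card κ := by
  classical
  induction h : Fintype.card κ generalizing κ ι with
  | zero =>
    have : IsEmpty κ := Fintype.card_eq_zero_iff.1 h
    have : IsEmpty ι := ⟨fun j => hC0 j (le_bot_iff.1 ((hCV j).trans_eq (iSup_of_empty _)))⟩
    simp
  | succ n ih =>
    obtain ⟨i₀⟩ : Nonempty κ := Fintype.card_pos_iff.1 (by omega)
    set W := ⨆ i : {i // i ≠ i₀}, V i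
    have hVW : ⨆ i, V i = V i₀ ⊔ W := by rw [iSup_split_single V i₀, iSup_subtype']
    have hV₀W : Disjoint (V i₀) W := by simpa only [iSup_subtype'] using hV i₀
    have hcard : Fintype.card {i // i ≠ i₀} = n := by simp [h]
    by_cases hsplit : ∃ j₀, Disjoint (C j₀) W
    · obtain ⟨j₀, hj₀⟩ := hsplit
      obtain ⟨D, hD, hD0, hDW⟩ :=
        (hVu i₀).exists_iSupIndep_le hV₀W hC hC0 (fun j => hVW ▸ hCV j) hj₀
      have := ih (hV.comp Subtype.val_injective) (fun i => hVu i.1) hD hD0 hDW hcard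
      simp only [Fintype.card_subtype_compl, Fintype.card_unique] at this
      omega
    · have := ih (hV.comp Subtype.val_injective) (fun i => hVu i.1) (C := fun j => C j ⊓ W)
        (hC.mono fun j => inf_le_left) (fun j h => hsplit ⟨j, disjoint_iff.2 h⟩)
        (fun j => inf_le_right) hcard
      omega

end Lattice

section Injective

variable {R M : Type*} [Ring R] [AddCommGroup M] [Module R M] [Module.Injective R M]

theorem Module.Injective.exists_projection_of_disjoint {K H : Submodule R M}
    (hKH : Disjoint K H) : ∃ g : M →ₗ[R] M, (∀ k ∈ K, g k = k) ∧ ∀ h ∈ H, g h = 0 := by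
  have hinj : Function.Injective (K.subtype.coprod H.subtype) := by
    rw [← LinearMap.ker_eq_bot, LinearMap.ker_coprod_of_disjoint_range] <;> simp [hKH]
  obtain ⟨g, hg⟩ := Module.Injective.out _ hinj (K.subtype ∘ₗ LinearMap.fst R K H)
  exact ⟨g, fun k hk => by simpa using hg (⟨k, hk⟩, 0), fun h hh => by simpa using hg (0, ⟨h, hh⟩)⟩

theorem Module.Injective.isCompl_of_maximal_disjoint {N K H : Submodule R M}
    (hK : Maximal (Disjoint · N) K) (hH : Maximal (Disjoint · K) H) :
    IsCompl K H := by
  obtain ⟨g, hgK, hgH⟩ := exists_projection_of_disjoint hH.prop.symm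
  have hker : LinearMap.ker g = H := by
    refine le_antisymm (hH.2 ?_ fun h hh => hgH h hh) fun h hh => hgH h hh
    exact Submodule.disjoint_def.2 fun x hx hxK => (hgK x hxK).symm.trans hx
  have hmul : ∀ x, g x ≠ 0 → ∃ r : R, r • g x ∈ K ∧ r • g x ≠ 0 := by
    intro x hx
    have hxH : x ∉ H := fun h => hx (hgH x h)
    have : ¬ Disjoint (H ⊔ R ∙ x) K := fun hd =>
      hxH (hH.2 hd le_sup_left (Submodule.mem_sup_right (Submodule.mem_span_singleton_self x)))
    obtain ⟨z, hz, hzK, hz0⟩ : ∃ z ∈ H ⊔ R ∙ x, z ∈ K ∧ z ≠ 0 := by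
      simpa [Submodule.disjoint_def] using this
    obtain ⟨h, hh, y, hy, rfl⟩ := Submodule.mem_sup.1 hz
    obtain ⟨r, rfl⟩ := Submodule.mem_span_singleton.1 hy
    have hgz : r • g x = h + r • x := by rw [← hgK _ hzK]; simp [hgH h hh]
    exact ⟨r, hgz ▸ hzK, hgz ▸ hz0⟩
  have hrange : LinearMap.range g ≤ K := by
    refine hK.2 (Submodule.disjoint_def.2 ?_) fun k hk => ⟨k, hgK k hk⟩
    rintro _ ⟨x, rfl⟩ hxN
    by_contra hx
    obtain ⟨r, hrK, hr0⟩ := hmul x hx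
    exact hr0 (Submodule.disjoint_def.1 hK.prop _ hrK (N.smul_mem r hxN))
  refine ⟨hH.prop.symm, codisjoint_iff_le_sup.2 fun x _ => ?_⟩
  have hgx : g x ∈ K := hrange ⟨x, rfl⟩
  rw [← add_sub_cancel (g x) x]
  refine Submodule.add_mem_sup hgx ?_
  rw [← hker, LinearMap.mem_ker, map_sub, hgK _ hgx, sub_self]

theorem Module.Injective.isUniform_top
    (hM : ∀ A B : Submodule R M, IsCompl A B → A = ⊥ ∨ B = ⊥) :
    IsUniform (⊤ : Submodule R M) := by
  intro N₁ _ N₂ _ hN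
  obtain ⟨K, hN₁K, hK⟩ := exists_le_maximal_disjoint hN
  obtain ⟨H, hN₂H, hH⟩ := exists_le_maximal_disjoint hK.prop.symm
  exact (hM K H (isCompl_of_maximal_disjoint hK hH)).imp
    (fun h => le_bot_iff.1 (hN₁K.trans h.le)) (fun h => le_bot_iff.1 (hN₂H.trans h.le))

end Injective

theorem Submodule.isUniform_of_isUniform_top {R M : Type*} [Ring R] [AddCommGroup M]
    [Module R M] {D : Submodule R M} (h : IsUniform (⊤ : Submodule R D)) : IsUniform D := by
  have hbot : ∀ {x}, x ≤ D → comap D.subtype x = ⊥ → x = ⊥ := fun hx h0 => by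
    rw [← inf_eq_right.2 hx, ← map_comap_subtype, h0, map_bot]
  intro b hb c hc hbc
  refine (h _ le_top _ le_top ?_).imp (hbot hb) (hbot hc)
  rw [disjoint_iff, ← comap_inf, hbc.eq_bot, comap_bot, ker_subtype]

theorem HasFiniteGoldieDimension.exists_card_le {R M : Type u} [CommRing R] [AddCommGroup M]
    [Module R M] (h : HasFiniteGoldieDimension R M) :
    ∃ n : ℕ, ∀ {ι : Type*} [Fintype ι] (C : ι → Submodule R M), iSupIndep C →
      (∀ i, C i ≠ ⊥) → Fintype.card ι ≤ n := by
  obtain ⟨E, f, ⟨-, hf, -⟩, n, D, hD, hDi⟩ := h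
  refine ⟨n, fun C hC hC0 => ?_⟩
  have hDu : ∀ i, IsUniform (D i) := fun i => by
    have := (hDi i).1
    exact Submodule.isUniform_of_isUniform_top (Module.Injective.isUniform_top (hDi i).2.2)
  simpa using card_le_card_of_iSupIndep_of_isUniform hD.submodule_iSupIndep hDu
    (f.iSupIndep_map hf hC)
    (fun i => (Submodule.map_injective_of_injective hf).ne_iff' (Submodule.map_bot f) |>.2 (hC0 i))
    (fun i => hD.submodule_iSup_eq_top ▸ le_top)

section MinimalPrimes

variable {T : Type*} [CommRing T]

theorem exists_mul_eq_zero_of_mem_minimalPrimes {P Q : Ideal T} (hP : P ∈ minimalPrimes T)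
    (hQ : Q ∈ minimalPrimes T) (hPQ : P ≠ Q) : ∃ a ∉ P, ∃ b ∉ Q, a * b = 0 := by
  obtain ⟨t, htQ, htP⟩ : ∃ t ∈ Q, t ∉ P :=
    SetLike.not_le_iff_exists.1 fun hQP => hPQ (le_antisymm (hP.2 hQ.1 hQP) hQP)
  have := hQ.1.1
  have hnil : algebraMap T (Localization.AtPrime Q) t ∈
      ((⊥ : Ideal T).map (algebraMap T _)).radical := by
    rw [IsLocalization.AtPrime.radical_map_of_mem_minimalPrimes _ Q ⊥ hQ]
    exact Ideal.mem_map_of_mem _ htQ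
  obtain ⟨k, hk⟩ := hnil
  rw [Ideal.map_bot, Ideal.mem_bot, ← map_pow, IsLocalization.map_eq_zero_iff Q.primeCompl] at hk
  obtain ⟨⟨s, hs⟩, hst⟩ := hk
  exact ⟨t ^ k, fun h => htP (hP.1.1.mem_of_pow_mem k h), s, hs, by rw [mul_comm]; exact hst⟩

theorem exists_pairwise_mul_eq_zero_of_mem_minimalPrimes {ι : Type*} [Fintype ι] {P : ι → Ideal T}
    (hP : ∀ i, P i ∈ minimalPrimes T) (hPinj : Function.Injective P) :
    ∃ x : ι → T, (∀ i, x i ∉ P i) ∧ Pairwise fun i j => x i * x j = 0 := by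
  have : ∀ i j, ∃ a ∉ P i, ∃ b ∉ P j, i ≠ j → a * b = 0 := by
    intro i j
    by_cases hij : i = j
    · exact ⟨1, (hP i).1.1.one_notMem, 1, (hP j).1.1.one_notMem, fun h => (h hij).elim⟩
    · obtain ⟨a, ha, b, hb, hab⟩ :=
        exists_mul_eq_zero_of_mem_minimalPrimes (hP i) (hP j) (hPinj.ne hij)
      exact ⟨a, ha, b, hb, fun _ => hab⟩
  choose a ha b hb hab using this
  refine ⟨fun i => ∏ k, a i k * b k i, fun i hi => ?_, fun i j hij => ?_⟩
  · have := (hP i).1.1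
    obtain ⟨k, -, hk⟩ := Ideal.IsPrime.prod_mem_iff.1 hi
    exact ((hP i).1.1.mem_or_mem hk).elim (ha i k) (hb k i)
  · have hai : a i j ∣ ∏ k, a i k * b k i :=
      (dvd_mul_right _ _).trans (Finset.dvd_prod_of_mem _ (Finset.mem_univ j))
    have hbj : b i j ∣ ∏ k, a j k * b k j :=
      (dvd_mul_left _ _).trans (Finset.dvd_prod_of_mem _ (Finset.mem_univ i))
    simpa [hab i j hij] using mul_dvd_mul hai hbj

theorem iSupIndep_span_singleton_of_pairwise_mul_eq_zero {R ι : Type*} [CommSemiring R]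
    [Algebra R T] [IsReduced T] {x : ι → T} (hx : Pairwise fun i j => x i * x j = 0) :
    iSupIndep fun i => Submodule.span R {x i} := by
  intro i
  refine Submodule.disjoint_def.2 fun z hz hz' => ?_
  obtain ⟨r, rfl⟩ := Submodule.mem_span_singleton.1 hz
  have hker : (⨆ (j) (_ : j ≠ i), Submodule.span R {x j}) ≤
      LinearMap.ker (LinearMap.mulRight R (x i)) :=
    iSup₂_le fun j hj => (Submodule.span_singleton_le_iff_mem _ _).2 (hx hj)
  have hzx : r • x i * x i = 0 := hker hz'
  exact IsReduced.eq_zero _ ⟨2, by rw [pow_two, mul_smul_comm, hzx, smul_zero]⟩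

end MinimalPrimes

theorem HasFiniteGoldieDimension.finite_minimalPrimes {R T : Type u} [CommRing R] [CommRing T]
    [Algebra R T] [IsReduced T] (h : HasFiniteGoldieDimension R T) : (minimalPrimes T).Finite := by
  obtain ⟨n, hn⟩ := h.exists_card_le
  by_contra hinf
  obtain ⟨s, hs, hcard⟩ := Set.Infinite.exists_subset_card_eq hinf (n + 1)
  obtain ⟨x, hxP, hx⟩ := exists_pairwise_mul_eq_zero_of_mem_minimalPrimes
    (P := ((↑) : s → Ideal T)) (fun P => hs P.2) Subtype.val_injective
  have := hn (fun P => Submodule.span R {x P}) (iSupIndep_span_singleton_of_pairwise_mul_eq_zero hx)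
    fun P h => hxP P (Submodule.span_singleton_eq_bot.1 h ▸ zero_mem _)
  simp [hcard] at this

theorem Ideal.finite_minimalPrimes_quotient_iff {R : Type*} [CommRing R] (I : Ideal R) :
    (minimalPrimes (R ⧸ I)).Finite ↔ I.minimalPrimes.Finite := by
  rw [Ideal.minimalPrimes_eq_comap, Set.finite_image_iff
    (Ideal.comap_injective_of_surjective _ Ideal.Quotient.mk_surjective).injOn]

theorem minimalPrimes_quotient_finite_general (R : Type u) [CommRing R]
    (hb : ∀ (M : Type u) [AddCommGroup M] [Module R M],
      Module.Finite R M → HasFiniteGoldieDimension R M)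
    (A : Ideal R) :
    (minimalPrimes (R ⧸ A)).Finite := by
  have : IsReduced (R ⧸ A.radical) :=
    (Ideal.isRadical_iff_quotient_reduced _).1 A.radical_isRadical
  rw [Ideal.finite_minimalPrimes_quotient_iff, ← Ideal.radical_minimalPrimes,
    ← Ideal.finite_minimalPrimes_quotient_iff]
  exact (hb _ inferInstance).finite_minimalPrimes

/-- Let `R` be an arithmetical ring such that every finitely generated
module has finite Goldie dimension.  Then `R/A` has only finitely many minimal primes, for
every ideal `A` of `R`. -/
theorem minimalPrimes_quotient_finite (R : Type u) [CommRing R]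
    (harith : IsArithmetical R)
    (hb : ∀ (M : Type u) [AddCommGroup M] [Module R M],
      Module.Finite R M → HasFiniteGoldieDimension R M)
    (A : Ideal R) :
    (minimalPrimes (R ⧸ A)).Finite :=
  minimalPrimes_quotient_finite_general R hb A
end

section
/- Let R be the trivial (square-zero) extension of ℤ by ℚ/ℤ, i.e., R = ℤ ⋉ ℚ/ℤ with multiplication (d, e)(d', e') = (dd', de' + d'e). Then R is an arithmetical ring, its unique minimal prime ideal is N = 0 ⋉ ℚ/ℤ, and R does not have finite Goldie dimension as an R-module. -/
universe u

/-- `ℚ/ℤ` as a `ℤ`-module. -/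
abbrev QZmod : Type := ℚ ⧸ (Submodule.span ℤ {(1 : ℚ)})

noncomputable instance : Module ℤᵐᵒᵖ QZmod :=
  Module.compHom QZmod ((RingHom.id ℤ).fromOpposite fun _ _ => mul_comm _ _)

instance : IsCentralScalar ℤ QZmod := ⟨fun _ _ => rfl⟩

/-- The trivial (square-zero) extension `ℤ ⋉ ℚ/ℤ`. -/
abbrev ZQZ : Type := TrivSqZeroExt ℤ QZmod

/-!
Every prime of `R = ℤ ⋉ ℚ/ℤ` contains the square-zero ideal `N = 0 ⋉ ℚ/ℤ` and `R/N ≅ ℤ` is a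
domain, so `N` is the unique minimal prime and the maximal ideals are the `P_p = pℤ ⋉ ℚ/ℤ`.
The localization at `P_p` is a chain ring because any two elements of `R` become comparable
under divisibility once one of them is multiplied by a suitable `u ∉ P_p`: away from `N` this
follows from the divisibility of `ℚ/ℤ`, and inside `N` from the fact that a cyclic subgroup of
`ℚ/ℤ` is determined by its order.

For the Goldie dimension, `Hom_ℤ(R, ℤ(p^∞))` is an injective `R`-module in which the cyclic
submodule generated by `z ↦ z.1 / p`, isomorphic to `R/P_p`, is essential. Hence an
indecomposable injective module containing an element with annihilator `P_p` is a copy of it,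
and contains no element whose annihilator is another maximal ideal. The injective hull of `R`
contains `(0, 1/p)`, with annihilator `P_p`, for every prime `p`, so it would need infinitely
many indecomposable summands.
-/

open TrivSqZeroExt Ideal

theorem exists_not_dvd_and_dvd_mul_or_dvd_mul {α : Type*} [CommMonoidWithZero α]
    [UniqueFactorizationMonoid α] {p : α} (hp : Prime p) (a b : α) :
    ∃ u, ¬ p ∣ u ∧ (a ∣ u * b ∨ b ∣ u * a) := by
  rcases eq_or_ne b 0 with rfl | hb
  · exact ⟨1, hp.not_dvd_one, .inl (by simp)⟩
  obtain ⟨a', b', c, hrel, rfl, rfl⟩ := UniqueFactorizationMonoid.exists_reduced_factors' a b hb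
  by_cases ha' : p ∣ a'
  · exact ⟨b', fun hb' => hp.not_isUnit (hrel ha' hb'), .inr ⟨a', by ac_rfl⟩⟩
  · exact ⟨a', ha', .inl ⟨b', by ac_rfl⟩⟩

theorem IsChainRing.of_dvd_total {A : Type*} [CommRing A] (h : ∀ a b : A, a ∣ b ∨ b ∣ a) :
    IsChainRing A :=
  (PreValuationRing.iff_ideal_total.mp (PreValuationRing.iff_dvd_total.mpr ⟨h⟩)).total

theorem IsLocalization.isChainRing {A B : Type*} [CommRing A] [CommRing B] [Algebra A B]
    (S : Submonoid A) [IsLocalization S B] (h : ∀ a b : A, ∃ u ∈ S, a ∣ u * b ∨ b ∣ u * a) :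
    IsChainRing B := by
  have hassoc (x : B) : ∃ a : A, Associated x (algebraMap A B a) := by
    obtain ⟨⟨a, s⟩, hx⟩ := IsLocalization.surj S x
    exact ⟨a, (IsLocalization.map_units B s).unit, hx⟩
  have hdvd {a b u : A} (hu : u ∈ S) (hab : a ∣ u * b) : algebraMap A B a ∣ algebraMap A B b := by
    refine (IsUnit.dvd_mul_left (IsLocalization.map_units B ⟨u, hu⟩)).mp ?_
    simpa using map_dvd (algebraMap A B) hab
  refine .of_dvd_total fun x y => ?_
  obtain ⟨a, hx⟩ := hassoc x
  obtain ⟨b, hy⟩ := hassoc y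
  rw [hx.dvd_iff_dvd_left, hy.dvd_iff_dvd_right, hy.dvd_iff_dvd_left, hx.dvd_iff_dvd_right]
  obtain ⟨u, hu, hab | hba⟩ := h a b
  exacts [.inl (hdvd hu hab), .inr (hdvd hu hba)]

namespace TrivSqZeroExt

variable {R M : Type*} [CommRing R] [AddCommGroup M] [Module R M] [Module Rᵐᵒᵖ M]
  [IsCentralScalar R M]

theorem kerIdeal_le_radical_bot : kerIdeal R M ≤ (⊥ : Ideal (TrivSqZeroExt R M)).radical := by
  rw [← kerIdeal_sq, radical_pow _ two_ne_zero]
  exact le_radical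

theorem kerIdeal_le_of_isPrime (P : Ideal (TrivSqZeroExt R M)) [hP : P.IsPrime] :
    kerIdeal R M ≤ P :=
  kerIdeal_le_radical_bot.trans (hP.radical_le_iff.mpr bot_le)

theorem minimalPrimes_eq_kerIdeal [IsDomain R] :
    minimalPrimes (TrivSqZeroExt R M) = {kerIdeal R M} := by
  have hprime : (kerIdeal R M).IsPrime := RingHom.ker_isPrime _
  have hrad : (⊥ : Ideal (TrivSqZeroExt R M)).radical = kerIdeal R M :=
    le_antisymm (hprime.radical_le_iff.mpr bot_le) kerIdeal_le_radical_bot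
  change (⊥ : Ideal _).minimalPrimes = _
  rw [← radical_minimalPrimes, hrad, minimalPrimes_eq_subsingleton_self]

theorem exists_isMaximal_eq_comap_fstHom (P : Ideal (TrivSqZeroExt R M)) [hP : P.IsMaximal] :
    ∃ m : Ideal R, m.IsMaximal ∧ P = m.comap (fstHom R R M) := by
  have hsurj : Function.Surjective (fstHom R R M) := fun r => ⟨inl r, fst_inl M r⟩
  have hP' : (P.map (fstHom R R M)).comap (fstHom R R M) = P := by
    rw [comap_map_of_surjective' _ hsurj, sup_eq_left]
    exact kerIdeal_le_of_isPrime P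
  refine ⟨_, (map_eq_top_or_isMaximal_of_surjective _ hsurj hP).resolve_left fun h => ?_, hP'.symm⟩
  exact hP.ne_top (by rw [← hP', h, comap_top])

theorem dvd_iff_fst_dvd {a : TrivSqZeroExt R M} (ha : ∀ m : M, ∃ y, a.fst • y = m)
    (b : TrivSqZeroExt R M) : a ∣ b ↔ a.fst ∣ b.fst := by
  refine ⟨map_dvd (fstHom R R M), fun ⟨c, hc⟩ => ?_⟩
  obtain ⟨y, hy⟩ := ha (b.snd - c • a.snd)
  refine ⟨inl c + inr y, TrivSqZeroExt.ext ?_ ?_⟩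
  · simp [hc]
  · simp [hy]

theorem inr_dvd_inl_mul_inr {r s : R} {m m' : M} (h : r • m' = s • m) :
    (inr m : TrivSqZeroExt R M) ∣ inl r * inr m' :=
  ⟨inl s, by rw [inl_mul_inr, inr_mul_inl, h, op_smul_eq_smul]⟩

end TrivSqZeroExt

section Torsion

variable {R M N : Type*}

theorem Ideal.torsionOf_le_torsionOf_map [Semiring R] [AddCommMonoid M] [Module R M]
    [AddCommMonoid N] [Module R N] (f : M →ₗ[R] N) (x : M) :
    torsionOf R M x ≤ torsionOf R N (f x) := fun r hr => by
  rw [mem_torsionOf_iff] at hr ⊢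
  rw [← map_smul, hr, map_zero]

theorem Ideal.torsionOf_le_torsionOf_smul [CommSemiring R] [AddCommMonoid M] [Module R M]
    (c : R) (x : M) : torsionOf R M x ≤ torsionOf R M (c • x) :=
  torsionOf_le_torsionOf_map (LinearMap.lsmul R M c) x

theorem Ideal.ne_zero_of_torsionOf_eq [Semiring R] [AddCommMonoid M] [Module R M]
    {P : Ideal R} [hP : P.IsMaximal] {x : M} (h : torsionOf R M x = P) : x ≠ 0 := fun h0 =>
  hP.ne_top (h ▸ (torsionOf_eq_top_iff R x).mpr h0)

theorem Ideal.torsionOf_eq_of_le [Semiring R] [AddCommMonoid M] [Module R M]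
    {P : Ideal R} [hP : P.IsMaximal] {x : M} (hx : x ≠ 0) (h : P ≤ torsionOf R M x) :
    torsionOf R M x = P :=
  (hP.eq_of_le ((torsionOf_eq_top_iff R x).not.mpr hx) h).symm

theorem DirectSum.IsInternal.exists_ne_zero_torsionOf_le {ι : Type*} [Semiring R]
    [AddCommGroup M] [Module R M] [DecidableEq ι] {D : ι → Submodule R M}
    (h : DirectSum.IsInternal D) {x : M} (hx : x ≠ 0) :
    ∃ i, ∃ y : D i, y ≠ 0 ∧ torsionOf R M x ≤ torsionOf R (D i) y := by
  let e := LinearEquiv.ofBijective (DirectSum.coeLinearMap D) h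
  obtain ⟨i, hi⟩ : ∃ i, e.symm x i ≠ 0 := by
    by_contra! h0
    exact hx (e.symm.map_eq_zero_iff.mp (DirectSum.ext h0))
  exact ⟨i, _, hi, torsionOf_le_torsionOf_map (DirectSum.component R ι _ i ∘ₗ e.symm.toLinearMap) x⟩

theorem Submodule.mem_torsion'_powers_iff [CommSemiring R] [AddCommMonoid M] [Module R M]
    (p : R) (x : M) : x ∈ torsion' R M (Submonoid.powers p) ↔ ∃ k : ℕ, p ^ k • x = 0 := by
  rw [mem_torsion'_iff]
  constructor
  · rintro ⟨⟨_, k, rfl⟩, h⟩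
    exact ⟨k, h⟩
  · rintro ⟨k, h⟩
    exact ⟨⟨p ^ k, k, rfl⟩, h⟩

theorem exists_pow_smul_ne_zero_and_smul_eq_zero [Monoid R] [AddMonoid M] [DistribMulAction R M]
    (p : R) {y : M} (hy : y ≠ 0) {k : ℕ} (hk : p ^ k • y = 0) :
    ∃ j : ℕ, p ^ j • y ≠ 0 ∧ p • p ^ j • y = 0 := by
  induction k with
  | zero => exact absurd (by simpa using hk) hy
  | succ k ih =>
    by_cases h : p ^ k • y = 0
    · exact ih h
    · exact ⟨k, h, by rwa [smul_smul, ← pow_succ']⟩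

end Torsion

section PrimaryComponent

variable {G : Type*} [AddCommGroup G] {p : ℤ}

theorem exists_zsmul_eq_of_mem_torsion'_powers
    (hG : ∀ n : ℤ, n ≠ 0 → Function.Surjective fun x : G => n • x) (hp : Prime p)
    {n : ℤ} (hn : n ≠ 0) {x : G} (hx : x ∈ Submodule.torsion' ℤ G (Submonoid.powers p)) :
    ∃ y ∈ Submodule.torsion' ℤ G (Submonoid.powers p), n • y = x := by
  obtain ⟨k, hk⟩ := (Submodule.mem_torsion'_powers_iff p x).mp hx
  obtain ⟨m, hnm, hm⟩ :=
    (FiniteMultiplicity.of_not_isUnit hp.not_isUnit hn).exists_eq_pow_mul_and_not_dvd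
  generalize multiplicity p n = j at hnm
  obtain ⟨y₀, hy₀ : n • y₀ = x⟩ := hG n hn x
  -- `s * m ≡ 1 mod p ^ k`, so `(s * m) • y₀` is still a preimage of `x`, and it is `p`-primary.
  obtain ⟨s, t, hst⟩ := ((Prime.coprime_iff_not_dvd hp).mpr hm).symm.pow_right (n := k)
  have hsm : (s * m) • x = x := by
    rw [eq_sub_of_add_eq hst, sub_smul, one_smul, mul_smul, hk, smul_zero, sub_zero]
  refine ⟨(s * m) • y₀, (Submodule.mem_torsion'_powers_iff p _).mpr ⟨k + j, ?_⟩, ?_⟩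
  · rw [smul_smul, pow_add, show p ^ k * p ^ j * (s * m) = s * p ^ k * n by rw [hnm]; ring,
      mul_smul, hy₀, mul_smul, hk, smul_zero]
  · rw [smul_comm, hy₀, hsm]

theorem baer_torsion'_powers (hG : ∀ n : ℤ, n ≠ 0 → Function.Surjective fun x : G => n • x)
    (hp : Prime p) : Module.Baer ℤ (Submodule.torsion' ℤ G (Submonoid.powers p)) :=
  letI := divisibleByOfSMulRightSurj (Submodule.torsion' ℤ G (Submonoid.powers p)) ℤ
    fun {_} hn y =>
      let ⟨z, hz, hzy⟩ := exists_zsmul_eq_of_mem_torsion'_powers hG hp hn y.2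
      ⟨⟨z, hz⟩, Subtype.ext hzy⟩
  Module.Baer.of_divisible _

end PrimaryComponent

def Coinduced (A Q : Type*) [Semiring A] [AddCommGroup Q] : Type _ := A →+ Q

namespace Coinduced

variable {A Q : Type*} [CommRing A] [AddCommGroup Q]

instance : AddCommGroup (Coinduced A Q) := inferInstanceAs (AddCommGroup (A →+ Q))

instance : FunLike (Coinduced A Q) A Q := inferInstanceAs (FunLike (A →+ Q) A Q)

instance : AddMonoidHomClass (Coinduced A Q) A Q := inferInstanceAs (AddMonoidHomClass (A →+ Q) A Q)

@[ext] theorem ext {F G : Coinduced A Q} (h : ∀ x, F x = G x) : F = G := DFunLike.ext _ _ h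

instance : SMul A (Coinduced A Q) where
  smul a F := AddMonoidHom.comp F (AddMonoidHom.mulLeft a)

@[simp] theorem smul_apply (a : A) (F : Coinduced A Q) (x : A) : (a • F) x = F (a * x) := rfl

@[simp] theorem add_apply (F G : Coinduced A Q) (x : A) : (F + G) x = F x + G x := rfl

@[simp] theorem zero_apply (x : A) : (0 : Coinduced A Q) x = 0 := rfl

instance : Module A (Coinduced A Q) where
  one_smul F := by ext; simp
  mul_smul a b F := by ext; simp [mul_assoc, mul_left_comm a b]
  smul_zero a := by ext; simp
  smul_add a F G := by ext; simp
  add_smul a b F := by ext; simp [add_mul]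
  zero_smul F := by ext; simp

def lift {Y : Type*} [AddCommGroup Y] [Module A Y] (G : Y →+ Q) : Y →ₗ[A] Coinduced A Q where
  toFun y := AddMonoidHom.mk' (fun x => G (x • y)) fun x x' => by simp [add_smul]
  map_add' y y' := Coinduced.ext fun x => show G (x • (y + y')) = G (x • y) + G (x • y') by
    simp
  map_smul' a y := Coinduced.ext fun x => show G (x • a • y) = G ((a * x) • y) by
    rw [smul_smul, mul_comm]

@[simp] theorem lift_apply {Y : Type*} [AddCommGroup Y] [Module A Y] (G : Y →+ Q) (y : Y)
    (x : A) : lift G y x = G (x • y) := rfl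

end Coinduced

theorem Coinduced.injective {A Q : Type u} [CommRing A] [AddCommGroup Q] (hQ : Module.Baer ℤ Q) :
    Module.Injective A (Coinduced A Q) where
  out X Y _ _ _ _ f hf g := by
    obtain ⟨G, hG⟩ := hQ.extension_property_addMonoidHom f.toAddMonoidHom hf
      (AddMonoidHom.mk' (fun x => g x 1) fun x x' => by simp)
    refine ⟨lift G, fun x => Coinduced.ext fun z => ?_⟩
    have := DFunLike.congr_fun hG (z • x)
    simp only [AddMonoidHom.coe_comp, Function.comp_apply, LinearMap.toAddMonoidHom_coe,
      map_smul, AddMonoidHom.mk'_apply] at this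
    simp [this]

namespace TrivSqZeroExt

variable {M Q : Type*} [AddCommGroup M] [Module ℤᵐᵒᵖ M] [IsCentralScalar ℤ M] [AddCommGroup Q]

variable (M) in
def fstSmul (ω : Q) : Coinduced (TrivSqZeroExt ℤ M) Q :=
  AddMonoidHom.mk' (fun z => z.fst • ω) fun a b => by simp [add_smul]

@[simp] theorem fstSmul_apply (ω : Q) (z : TrivSqZeroExt ℤ M) : fstSmul M ω z = z.fst • ω := rfl

theorem smul_fstSmul (r : TrivSqZeroExt ℤ M) (ω : Q) : r • fstSmul M ω = fstSmul M (r.fst • ω) :=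
  Coinduced.ext fun z => by simp [mul_smul, smul_comm r.fst]

theorem fstSmul_eq_zero_iff {ω : Q} : fstSmul M ω = 0 ↔ ω = 0 :=
  ⟨fun h => by simpa using DFunLike.congr_fun h 1, fun h => Coinduced.ext fun z => by simp [h]⟩

theorem torsionOf_fstSmul (ω : Q) :
    torsionOf (TrivSqZeroExt ℤ M) _ (fstSmul M ω) = (torsionOf ℤ Q ω).comap (fstHom ℤ ℤ M) := by
  ext r
  simp [mem_torsionOf_iff, smul_fstSmul, fstSmul_eq_zero_iff]

theorem smul_eq_fstSmul {F : Coinduced (TrivSqZeroExt ℤ M) Q} {x : TrivSqZeroExt ℤ M}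
    (h : ∀ m : M, F (inr m * x) = 0) : x • F = fstSmul M (F x) := Coinduced.ext fun z => by
  rw [Coinduced.smul_apply, fstSmul_apply, mul_comm, ← inl_fst_add_inr_snd_eq z, add_mul, map_add,
    h, add_zero, inl_mul_eq_smul, map_zsmul, fst_add, fst_inl, fst_inr, add_zero]

theorem exists_smul_ne_zero_mem_span_fstSmul {ω : Q}
    (hω : ∀ y : Q, y ≠ 0 → ∃ b : ℤ, b • y ≠ 0 ∧ b • y ∈ ℤ ∙ ω)
    {F : Coinduced (TrivSqZeroExt ℤ M) Q} (hF : F ≠ 0) :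
    ∃ r : TrivSqZeroExt ℤ M, r • F ≠ 0 ∧ r • F ∈ TrivSqZeroExt ℤ M ∙ fstSmul M ω := by
  obtain ⟨x, hx, hxF⟩ : ∃ x, F x ≠ 0 ∧ x • F = fstSmul M (F x) := by
    by_cases hN : ∃ m, F (inr m) ≠ 0
    · obtain ⟨m, hm⟩ := hN
      exact ⟨inr m, hm, smul_eq_fstSmul fun m' => by rw [inr_mul_inr, map_zero]⟩
    · push Not at hN
      have h1 : (1 : TrivSqZeroExt ℤ M) • F = fstSmul M (F 1) :=
        smul_eq_fstSmul fun m => by simp [hN]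
      refine ⟨1, fun h0 => hF ?_, h1⟩
      rwa [one_smul, h0, fstSmul_eq_zero_iff.mpr rfl] at h1
  obtain ⟨b, hb, hbω⟩ := hω _ hx
  obtain ⟨c, hc⟩ := Submodule.mem_span_singleton.mp hbω
  have hrF : (inl b * x) • F = (inl c : TrivSqZeroExt ℤ M) • fstSmul M ω := by
    rw [mul_smul, hxF, smul_fstSmul, smul_fstSmul, fst_inl, fst_inl, hc]
  refine ⟨inl b * x, ?_, Submodule.mem_span_singleton.mpr ⟨inl c, hrF.symm⟩⟩
  rwa [mul_smul, hxF, smul_fstSmul, fst_inl, Ne, fstSmul_eq_zero_iff]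

end TrivSqZeroExt

section Indecomposable

variable {A : Type u} [CommRing A] {D W : Type u} [AddCommGroup D] [Module A D]
  [AddCommGroup W] [Module A W]

theorem IsIndecomposableModule.surjective_of_injective (hD : IsIndecomposableModule A D)
    [Module.Injective A W] [Nontrivial W] {h : W →ₗ[A] D} (hh : Function.Injective h) :
    Function.Surjective h := by
  obtain ⟨r, hr⟩ := Module.Injective.extension_property A W W D h hh LinearMap.id
  have hrh (w : W) : r (h w) = w := LinearMap.congr_fun hr w
  have hidem : IsIdempotentElem (h ∘ₗ r) := LinearMap.ext fun y => by simp [hrh]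
  rcases hD.2 _ _ (LinearMap.IsIdempotentElem.isCompl hidem) with hrange | hker
  · obtain ⟨w, hw⟩ := exists_ne (0 : W)
    refine absurd (hh ?_) hw
    rw [map_zero, ← hrh w]
    exact (Submodule.eq_bot_iff _).mp hrange _ ⟨h w, rfl⟩
  · intro y
    refine ⟨r y, (sub_eq_zero.mp ?_).symm⟩
    rw [← Submodule.mem_bot A, ← hker, LinearMap.mem_ker, map_sub]
    simp [hrh]

theorem exists_injective_apply_eq_of_torsionOf_eq [Module.Injective A D] {w₀ : W}
    (hw₀ : ∀ w : W, w ≠ 0 → ∃ a : A, a • w ≠ 0 ∧ a • w ∈ A ∙ w₀) {t : D}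
    (ht : torsionOf A D t = torsionOf A W w₀) :
    ∃ h : W →ₗ[A] D, Function.Injective h ∧ h w₀ = t := by
  let τ := (torsionOf A W w₀).liftQ (LinearMap.toSpanSingleton A W w₀) le_rfl
  let ρ := (torsionOf A W w₀).liftQ (LinearMap.toSpanSingleton A D t) ht.ge
  have hτ : Function.Injective τ :=
    LinearMap.ker_eq_bot.mp (Submodule.ker_liftQ_eq_bot' _ _ rfl)
  obtain ⟨h, hh⟩ := Module.Injective.extension_property A D _ _ τ hτ ρ
  have hw₀t : h w₀ = t := by
    have := LinearMap.congr_fun hh (Submodule.Quotient.mk (1 : A))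
    change h ((1 : A) • w₀) = (1 : A) • t at this
    simpa using this
  have hspan (a : A) : h (a • w₀) = 0 → a • w₀ = 0 := by
    rw [map_smul, hw₀t, ← mem_torsionOf_iff, ← mem_torsionOf_iff, ht]
    exact id
  refine ⟨h, LinearMap.ker_eq_bot.mp (Submodule.eq_bot_iff _ |>.mpr fun w hw => ?_), hw₀t⟩
  by_contra hw0
  obtain ⟨a, ha, haw⟩ := hw₀ w hw0
  obtain ⟨b, hb⟩ := Submodule.mem_span_singleton.mp haw
  refine ha (hb ▸ hspan b ?_)
  rw [hb, map_smul, LinearMap.mem_ker.mp hw, smul_zero]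

theorem IsIndecomposableModule.exists_smul_ne_zero_mem_span (hD : IsIndecomposableModule A D)
    [Module.Injective A D] [Module.Injective A W] {w₀ : W}
    (hw₀ : ∀ w : W, w ≠ 0 → ∃ a : A, a • w ≠ 0 ∧ a • w ∈ A ∙ w₀) {t : D} (ht0 : t ≠ 0)
    (ht : torsionOf A D t = torsionOf A W w₀) {x : D} (hx : x ≠ 0) :
    ∃ a : A, a • x ≠ 0 ∧ a • x ∈ A ∙ t := by
  obtain ⟨h, hh, hw₀t⟩ := exists_injective_apply_eq_of_torsionOf_eq hw₀ ht
  have : Nontrivial W := ⟨⟨w₀, 0, fun h0 => ht0 (by rw [← hw₀t, h0, map_zero])⟩⟩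
  obtain ⟨w, rfl⟩ := hD.surjective_of_injective hh x
  obtain ⟨a, ha, haw⟩ := hw₀ w (by rintro rfl; exact hx (map_zero h))
  obtain ⟨b, hb⟩ := Submodule.mem_span_singleton.mp haw
  refine ⟨a, ?_, Submodule.mem_span_singleton.mpr ⟨b, ?_⟩⟩
  · rw [← map_smul]
    exact fun h0 => ha (hh (h0.trans (map_zero h).symm))
  · rw [← map_smul, ← hb, map_smul, hw₀t]

theorem IsIndecomposableModule.eq_of_torsionOf_eq (hD : IsIndecomposableModule A D)
    [Module.Injective A D] [Module.Injective A W] {w₀ : W}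
    (hw₀ : ∀ w : W, w ≠ 0 → ∃ a : A, a • w ≠ 0 ∧ a • w ∈ A ∙ w₀) {P Q : Ideal A} [P.IsMaximal]
    [Q.IsMaximal] (hP : torsionOf A W w₀ = P) {t t' : D} (ht : torsionOf A D t = P)
    (ht' : torsionOf A D t' = Q) : P = Q := by
  obtain ⟨a, ha, hat⟩ := hD.exists_smul_ne_zero_mem_span hw₀ (ne_zero_of_torsionOf_eq ht)
    (ht.trans hP.symm) (ne_zero_of_torsionOf_eq ht')
  obtain ⟨b, hb⟩ := Submodule.mem_span_singleton.mp hat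
  have hP' : torsionOf A D (a • t') = P :=
    torsionOf_eq_of_le ha (ht ▸ hb ▸ torsionOf_le_torsionOf_smul b t)
  have hQ' : torsionOf A D (a • t') = Q :=
    torsionOf_eq_of_le ha (ht' ▸ torsionOf_le_torsionOf_smul a t')
  exact hP'.symm.trans hQ'

end Indecomposable

namespace QZmod

noncomputable def mk : ℚ →ₗ[ℤ] QZmod := Submodule.mkQ _

theorem mk_surjective : Function.Surjective mk := Submodule.mkQ_surjective _

theorem mk_eq_zero_iff (q : ℚ) : mk q = 0 ↔ ∃ n : ℤ, (n : ℚ) = q := by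
  simp [mk, Submodule.mem_span_singleton]

theorem zsmul_surjective {n : ℤ} (hn : n ≠ 0) : Function.Surjective fun e : QZmod => n • e := by
  intro e
  obtain ⟨q, rfl⟩ := mk_surjective e
  refine ⟨mk (q / n), ?_⟩
  simp only [← map_zsmul, zsmul_eq_mul]
  rw [mul_div_cancel₀ _ (Int.cast_ne_zero.mpr hn)]

theorem exists_zsmul_eq_of_den_dvd {q q' : ℚ} {u : ℤ} (h : (q'.den : ℤ) ∣ u * q.den) :
    ∃ c : ℤ, u • mk q' = c • mk q := by
  obtain ⟨k, hk⟩ := h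
  -- Bézout for `q.num` and `q.den` turns `mk q` into a generator of the `q.den`-torsion.
  obtain ⟨α, β, hαβ⟩ : IsCoprime q.num q.den := Int.isCoprime_iff_gcd_eq_one.mpr q.reduced
  refine ⟨k * q'.num * α, ?_⟩
  rw [← sub_eq_zero, ← map_zsmul, ← map_zsmul, ← map_sub, mk_eq_zero_iff]
  refine ⟨k * q'.num * β, ?_⟩
  have hq := Rat.num_div_den q
  have hq' := Rat.num_div_den q'
  have hk' : (u : ℚ) * q.den = q'.den * k := by exact_mod_cast hk
  have hαβ' : (α : ℚ) * q.num + β * q.den = 1 := by exact_mod_cast hαβ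
  set a := q.num
  set a' := q'.num
  have hd : (q.den : ℚ) ≠ 0 := by positivity
  have hd' : (q'.den : ℚ) ≠ 0 := by positivity
  set d := q.den
  set d' := q'.den
  rw [← hq, ← hq']
  simp only [zsmul_eq_mul]
  push_cast
  field_simp
  linear_combination (k * a' * d') * hαβ' - a' * hk'

theorem exists_not_dvd_and_zsmul_eq {p : ℤ} (hp : Prime p) (e e' : QZmod) :
    ∃ u c : ℤ, ¬ p ∣ u ∧ (u • e' = c • e ∨ u • e = c • e') := by
  obtain ⟨q, rfl⟩ := mk_surjective e
  obtain ⟨q', rfl⟩ := mk_surjective e'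
  obtain ⟨u, hu, h | h⟩ := exists_not_dvd_and_dvd_mul_or_dvd_mul hp (q'.den : ℤ) q.den
  · obtain ⟨c, hc⟩ := exists_zsmul_eq_of_den_dvd h
    exact ⟨u, c, hu, .inl hc⟩
  · obtain ⟨c, hc⟩ := exists_zsmul_eq_of_den_dvd h
    exact ⟨u, c, hu, .inr hc⟩

theorem zsmul_mk_inv_eq_zero_iff {p : ℤ} (hp : p ≠ 0) (n : ℤ) :
    n • mk (p : ℚ)⁻¹ = 0 ↔ p ∣ n := by
  have hp' : (p : ℚ) ≠ 0 := Int.cast_ne_zero.mpr hp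
  rw [← map_zsmul, mk_eq_zero_iff, zsmul_eq_mul]
  constructor
  · rintro ⟨m, hm⟩
    refine ⟨m, Int.cast_injective (α := ℚ) ?_⟩
    rw [Int.cast_mul, hm]
    field_simp
  · rintro ⟨m, rfl⟩
    exact ⟨m, by push_cast; field_simp⟩

theorem zsmul_mk_inv_self (p : ℤ) : p • mk (p : ℚ)⁻¹ = 0 := by
  rcases eq_or_ne p 0 with rfl | hp
  · simp
  · exact (zsmul_mk_inv_eq_zero_iff hp p).mpr dvd_rfl

theorem mem_span_mk_inv_of_zsmul_eq_zero {p : ℤ} (hp : p ≠ 0) {e : QZmod} (he : p • e = 0) :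
    e ∈ ℤ ∙ mk (p : ℚ)⁻¹ := by
  obtain ⟨q, rfl⟩ := mk_surjective e
  rw [← map_zsmul, mk_eq_zero_iff, zsmul_eq_mul] at he
  obtain ⟨m, hm⟩ := he
  refine Submodule.mem_span_singleton.mpr ⟨m, ?_⟩
  have hp' : (p : ℚ) ≠ 0 := Int.cast_ne_zero.mpr hp
  rw [← map_zsmul, zsmul_eq_mul, hm]
  field_simp

noncomputable abbrev primary (p : ℤ) : Submodule ℤ QZmod :=
  Submodule.torsion' ℤ QZmod (Submonoid.powers p)

theorem mk_inv_mem_primary (p : ℤ) : mk (p : ℚ)⁻¹ ∈ primary p :=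
  (Submodule.mem_torsion'_powers_iff p _).mpr ⟨1, by rw [pow_one, zsmul_mk_inv_self]⟩

theorem baer_primary {p : ℤ} (hp : Prime p) : Module.Baer ℤ (primary p) :=
  baer_torsion'_powers (fun _ hn => zsmul_surjective hn) hp

theorem torsionOf_mk_inv_primary {p : ℤ} (hp : p ≠ 0) :
    torsionOf ℤ (primary p) ⟨mk (p : ℚ)⁻¹, mk_inv_mem_primary p⟩ = Ideal.span {p} := by
  ext n
  rw [mem_torsionOf_iff, Ideal.mem_span_singleton, ← zsmul_mk_inv_eq_zero_iff hp,
    ← Subtype.coe_inj]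
  rfl

theorem exists_zsmul_ne_zero_mem_span_mk_inv {p : ℤ} (hp : p ≠ 0) (y : primary p) (hy : y ≠ 0) :
    ∃ b : ℤ, b • y ≠ 0 ∧ b • y ∈ ℤ ∙ (⟨mk (p : ℚ)⁻¹, mk_inv_mem_primary p⟩ : primary p) := by
  obtain ⟨k, hk⟩ := (Submodule.mem_torsion'_powers_iff p _).mp y.2
  obtain ⟨j, hj, hpj⟩ := exists_pow_smul_ne_zero_and_smul_eq_zero p hy (Subtype.ext hk)
  refine ⟨p ^ j, hj, ?_⟩
  obtain ⟨c, hc⟩ := Submodule.mem_span_singleton.mp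
    (mem_span_mk_inv_of_zsmul_eq_zero hp (congrArg Subtype.val hpj))
  exact Submodule.mem_span_singleton.mpr ⟨c, Subtype.ext hc⟩

end QZmod

namespace ZQZ

noncomputable def maxIdeal (p : ℤ) : Ideal ZQZ := (Ideal.span {p}).comap (fstHom ℤ ℤ QZmod)

theorem mem_maxIdeal {p : ℤ} {x : ZQZ} : x ∈ maxIdeal p ↔ p ∣ x.fst := by
  simp [maxIdeal, Ideal.mem_span_singleton]

theorem isMaximal_maxIdeal {p : ℤ} (hp : Prime p) : (maxIdeal p).IsMaximal :=
  have := PrincipalIdealRing.isMaximal_of_irreducible hp.irreducible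
  comap_isMaximal_of_surjective _ fun r => ⟨inl r, fst_inl QZmod r⟩

theorem exists_prime_eq_maxIdeal (P : Ideal ZQZ) [P.IsMaximal] :
    ∃ p : ℤ, Prime p ∧ P = maxIdeal p := by
  obtain ⟨m, hm, rfl⟩ := exists_isMaximal_eq_comap_fstHom P
  refine ⟨Submodule.IsPrincipal.generator m, Submodule.IsPrincipal.prime_generator_of_isPrime m
    (Ring.ne_bot_of_isMaximal_of_not_isField hm Int.not_isField), ?_⟩
  rw [maxIdeal, Ideal.span_singleton_generator]

theorem eq_of_maxIdeal_natCast_eq {p q : ℕ} (hp : p.Prime) (hq : q.Prime)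
    (h : maxIdeal p = maxIdeal q) : p = q := by
  have : inl (p : ℤ) ∈ maxIdeal q := h ▸ mem_maxIdeal.mpr (by simp)
  rw [mem_maxIdeal, fst_inl, Int.natCast_dvd_natCast] at this
  exact ((Nat.prime_dvd_prime_iff_eq hq hp).mp this).symm

theorem exists_not_dvd_fst_and_dvd {p : ℤ} (hp : Prime p) (a b : ZQZ) :
    ∃ u : ZQZ, ¬ p ∣ u.fst ∧ (a ∣ u * b ∨ b ∣ u * a) := by
  suffices H : ∀ a b : ZQZ, ∀ u : ℤ, ¬ p ∣ u → a.fst ∣ u * b.fst →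
      ∃ v : ZQZ, ¬ p ∣ v.fst ∧ (a ∣ v * b ∨ b ∣ v * a) by
    obtain ⟨u, hu, h | h⟩ := exists_not_dvd_and_dvd_mul_or_dvd_mul hp a.fst b.fst
    · exact H a b u hu h
    · obtain ⟨v, hv, h'⟩ := H b a u hu h
      exact ⟨v, hv, h'.symm⟩
  intro a b u hu hab
  by_cases ha : a.fst = 0
  · have hb : b.fst = 0 := by
      rw [ha, zero_dvd_iff] at hab
      exact (mul_eq_zero.mp hab).resolve_left (by rintro rfl; exact hu (dvd_zero p))
    rw [show a = inr a.snd from TrivSqZeroExt.ext ha rfl,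
      show b = inr b.snd from TrivSqZeroExt.ext hb rfl]
    obtain ⟨u', c, hu', h | h⟩ := QZmod.exists_not_dvd_and_zsmul_eq hp a.snd b.snd
    exacts [⟨inl u', by simpa using hu', .inl (inr_dvd_inl_mul_inr h)⟩,
      ⟨inl u', by simpa using hu', .inr (inr_dvd_inl_mul_inr h)⟩]
  · refine ⟨inl u, by simpa using hu, .inl ?_⟩
    rw [dvd_iff_fst_dvd (QZmod.zsmul_surjective ha)]
    simpa using hab

theorem isArithmetical : IsArithmetical ZQZ := by
  intro P hP
  obtain ⟨p, hp, rfl⟩ := exists_prime_eq_maxIdeal P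
  refine IsLocalization.isChainRing (maxIdeal p).primeCompl fun a b => ?_
  obtain ⟨u, hu, h⟩ := exists_not_dvd_fst_and_dvd hp a b
  exact ⟨u, mem_maxIdeal.not.mpr hu, h⟩

theorem smul_inr (r : ZQZ) (e : QZmod) : r • inr e = (inr (r.fst • e) : ZQZ) := by
  ext <;> simp

theorem torsionOf_inr_mk_inv {p : ℤ} (hp : p ≠ 0) :
    torsionOf ZQZ ZQZ (inr (QZmod.mk (p : ℚ)⁻¹)) = maxIdeal p := by
  ext r
  rw [mem_torsionOf_iff, smul_inr, ← inr_zero, inr_injective.eq_iff,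
    QZmod.zsmul_mk_inv_eq_zero_iff hp, mem_maxIdeal]

theorem torsionOf_fstSmul_mk_inv {p : ℤ} (hp : p ≠ 0) :
    torsionOf ZQZ _ (fstSmul QZmod (⟨QZmod.mk (p : ℚ)⁻¹, QZmod.mk_inv_mem_primary p⟩ :
      QZmod.primary p)) = maxIdeal p := by
  rw [torsionOf_fstSmul, QZmod.torsionOf_mk_inv_primary hp]
  rfl

theorem maxIdeal_eq_of_torsionOf_eq {D : Type} [AddCommGroup D] [Module ZQZ D]
    [Module.Injective ZQZ D] (hD : IsIndecomposableModule ZQZ D) {p q : ℤ} (hp : Prime p)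
    (hq : Prime q) {t t' : D} (ht : torsionOf ZQZ D t = maxIdeal p)
    (ht' : torsionOf ZQZ D t' = maxIdeal q) : maxIdeal p = maxIdeal q :=
  have := isMaximal_maxIdeal hp
  have := isMaximal_maxIdeal hq
  have := Coinduced.injective (A := ZQZ) (QZmod.baer_primary hp)
  hD.eq_of_torsionOf_eq
    (fun _ => exists_smul_ne_zero_mem_span_fstSmul
      (QZmod.exists_zsmul_ne_zero_mem_span_mk_inv hp.ne_zero))
    (torsionOf_fstSmul_mk_inv hp.ne_zero) ht ht'

theorem not_hasFiniteGoldieDimension : ¬ HasFiniteGoldieDimension ZQZ ZQZ := by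
  rintro ⟨E, f, ⟨-, hf, -⟩, n, D, hD, hDi⟩
  let S (i : Fin n) : Set ℕ := {p | p.Prime ∧ ∃ y : D i, torsionOf ZQZ (D i) y = maxIdeal p}
  have hS (i : Fin n) : (S i).Subsingleton := by
    rintro p ⟨hp, y, hy⟩ q ⟨hq, y', hy'⟩
    have := (hDi i).1
    exact eq_of_maxIdeal_natCast_eq hp hq (maxIdeal_eq_of_torsionOf_eq (hDi i).2
      (Nat.prime_iff_prime_int.mp hp) (Nat.prime_iff_prime_int.mp hq) hy hy')
  have hcover : {p | p.Prime} ⊆ ⋃ i, S i := fun p hp => by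
    have := isMaximal_maxIdeal (Nat.prime_iff_prime_int.mp hp)
    have hx := torsionOf_inr_mk_inv (p := p) (by exact_mod_cast hp.ne_zero)
    obtain ⟨i, y, hy, hle⟩ :=
      hD.exists_ne_zero_torsionOf_le ((map_ne_zero_iff f hf).mpr (ne_zero_of_torsionOf_eq hx))
    exact Set.mem_iUnion.mpr ⟨i, hp, y,
      torsionOf_eq_of_le hy (hx ▸ (torsionOf_le_torsionOf_map f _).trans hle)⟩
  exact Nat.infinite_setOfPred_prime ((Set.finite_iUnion fun i => (hS i).finite).subset hcover)

end ZQZ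

/-- The trivial extension `R = ℤ ⋉ ℚ/ℤ` is an arithmetical ring, its unique
minimal prime is `N = 0 ⋉ ℚ/ℤ` (the kernel of the first projection), and `R` does not have
finite Goldie dimension as a module over itself. -/
theorem trivSqZeroExt_int_ratModInt :
    IsArithmetical ZQZ ∧
      minimalPrimes ZQZ = {RingHom.ker (TrivSqZeroExt.fstHom ℤ ℤ QZmod)} ∧
      ¬ HasFiniteGoldieDimension ZQZ ZQZ :=
  ⟨ZQZ.isArithmetical, minimalPrimes_eq_kerIdeal, ZQZ.not_hasFiniteGoldieDimension⟩
end

section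
/- Let R be an integral domain of finite character. For each maximal ideal P of R, let T_(P) be a torsion R_P-module (viewed as an R-module). Then the torsion submodule of the product ∏_{P ∈ Max R} T_(P) is the direct sum ⊕_{P ∈ Max R} T_(P). -/
universe u

/-! If `r ≠ 0` kills `f`, then `r` acts invertibly on `T P` for every maximal `P`
not containing `r`, so `f P = 0` off the finitely many maximal ideals containing `r`.
Conversely each `T P` is `R`-torsion, because a nonzerodivisor `r / s` of `R_P` has numerator
`r` a nonzerodivisor of `R`, and finitely many nonzero components are killed by the product of
their annihilators. -/

theorem FiniteCharacter.finite_setOf_mem_asIdeal {R : Type u} [CommRing R]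
    (hfc : FiniteCharacter R) {r : R} (hr : r ≠ 0) :
    {P : MaximalSpectrum R | r ∈ P.asIdeal}.Finite :=
  ((hfc r hr).preimage (Set.injOn_of_injective fun _ _ => MaximalSpectrum.ext)).subset
    fun P hP => ⟨P.isMaximal, hP⟩

theorem IsLocalization.smul_eq_zero_iff_of_mem {R M : Type*} (A : Type*) [CommRing R]
    [CommRing A] [Algebra R A] (S : Submonoid R) [IsLocalization S A] [AddCommGroup M] [Module R M]
    [Module A M] [IsScalarTower R A M] {s : R} (hs : s ∈ S) (x : M) :
    s • x = 0 ↔ x = 0 := by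
  rw [← algebraMap_smul A s x]
  exact (IsLocalization.map_units A ⟨s, hs⟩).smul_eq_zero

theorem Module.IsTorsion.of_isLocalization {R A M : Type*} [CommRing R] [CommRing A]
    [Algebra R A] (S : Submonoid R) [IsLocalization S A] (hS : S ≤ nonZeroDivisors R)
    [AddCommGroup M] [Module R M] [Module A M] [IsScalarTower R A M] (h : Module.IsTorsion A M) :
    Module.IsTorsion R M := by
  intro x
  obtain ⟨a, ha⟩ := h (x := x)
  obtain ⟨⟨r, s⟩, hrs⟩ := IsLocalization.surj S (a : A)
  have hr : r ∈ nonZeroDivisors R := by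
    refine mem_nonZeroDivisors_of_injective (IsLocalization.injective A hS) ?_
    rw [← hrs]
    exact mul_mem a.2 (IsLocalization.nonZeroDivisors_le_comap S A (hS s.2))
  refine ⟨⟨r, hr⟩, ?_⟩
  rw [Submonoid.mk_smul, ← algebraMap_smul A r x, ← hrs, mul_comm, mul_smul,
    ← Submonoid.smul_def, ha, smul_zero]

theorem Submodule.mem_torsion_pi_of_finite {R ι : Type*} {M : ι → Type*} [CommRing R]
    [∀ i, AddCommGroup (M i)] [∀ i, Module R (M i)] {f : ∀ i, M i}
    (hfin : {i | f i ≠ 0}.Finite) (htor : ∀ i, f i ∈ torsion R (M i)) :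
    f ∈ torsion R (∀ i, M i) := by
  choose a ha using htor
  refine ⟨∏ i ∈ hfin.toFinset, a i, funext fun i => ?_⟩
  by_cases hi : f i = 0
  · simp [hi]
  · obtain ⟨c, hc⟩ := Finset.dvd_prod_of_mem a (hfin.mem_toFinset.mpr hi)
    rw [Pi.smul_apply, hc, mul_comm, mul_smul, ha i, smul_zero, Pi.zero_apply]

/-- Let `R` be a domain of finite character and, for each maximal ideal
`P`, let `T P` be a torsion `R_P`-module (viewed as an `R`-module).  Then the torsion
submodule of the product `∏_P T P` is the direct sum `⊕_P T P`, i.e. it consists exactly of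
the elements of finite support. -/
theorem torsion_submodule_of_pi_eq_directSum (R : Type u) [CommRing R] [IsDomain R]
    (hfc : FiniteCharacter R)
    (T : MaximalSpectrum R → Type u)
    [∀ P, AddCommGroup (T P)] [∀ P, Module R (T P)]
    [∀ P, Module (Localization.AtPrime P.asIdeal) (T P)]
    [∀ P, IsScalarTower R (Localization.AtPrime P.asIdeal) (T P)]
    (htor : ∀ P, Module.IsTorsion (Localization.AtPrime P.asIdeal) (T P)) :
    ∀ f : (∀ P, T P), f ∈ Submodule.torsion R (∀ P, T P) ↔ {P | f P ≠ 0}.Finite := by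
  intro f
  constructor
  · rintro ⟨r, hr⟩
    refine (hfc.finite_setOf_mem_asIdeal (nonZeroDivisors.ne_zero r.2)).subset fun P hP => ?_
    by_contra hrP
    exact hP <| (IsLocalization.smul_eq_zero_iff_of_mem (Localization.AtPrime P.asIdeal)
      P.asIdeal.primeCompl hrP (f P)).mp (congrFun hr P)
  · intro hfin
    have hT : ∀ P, Module.IsTorsion R (T P) := fun P =>
      (htor P).of_isLocalization P.asIdeal.primeCompl P.asIdeal.primeCompl_le_nonZeroDivisors
    exact Submodule.mem_torsion_pi_of_finite hfin fun P => hT P (x := f P)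
end

section
/- Let R be a Prüfer domain of finite character. For each maximal ideal P of R, let F_(P) be an injective R_P-module, and let F = ∏_{P ∈ Max R} F_(P), viewed as an R-module. Then for every multiplicative subset S of R, the localization S^{-1}F is an injective R-module. -/
universe u

/-!
Over the valuation domain `R_P`, the elements dividing no element of `S` form an ideal `p` which
annihilates the `S`-torsion `T_P` of `F_P`, while elements outside `p` act injectively on
`F_P / T_P`. Together with the flatness of ideals of `R_P`, this makes `F_P / T_P` injective over
`R_P`, hence over `R` because `R_P` is `R`-flat. Every `s ∈ S` acts surjectively on `F`, so
`S⁻¹F ≅ F / T` with `T` the `S`-torsion of `F`. For Baer's criterion on an ideal `J ∋ a₀ ≠ 0`,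
finite character makes `a₀` invertible on all but finitely many `F_P`: there one divides by `a₀`,
on the remaining ones one uses the injectivity of `F_P / T_P`, and the finitely many torsion
witnesses multiply into a single one.
-/

open Submodule nonZeroDivisors
open scoped TensorProduct

theorem Module.Baer.iff_exists_smul {R Q : Type*} [CommRing R] [AddCommGroup Q] [Module R Q] :
    Module.Baer R Q ↔ ∀ (I : Ideal R) (g : I →ₗ[R] Q), ∃ q : Q, ∀ x : I, g x = (x : R) • q := by
  refine ⟨fun h I g => ?_, fun h I g => ?_⟩
  · obtain ⟨g', hg'⟩ := h I g
    exact ⟨g' 1, fun x => by rw [← hg' x x.2, ← map_smul, smul_eq_mul, mul_one]⟩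
  · obtain ⟨q, hq⟩ := h I g
    exact ⟨LinearMap.toSpanSingleton R Q q, fun x mem => (hq ⟨x, mem⟩).symm⟩

theorem LinearMap.map_ideal_mul {R M : Type*} [CommRing R] [AddCommGroup M] [Module R M]
    {I : Ideal R} (f : I →ₗ[R] M) {a : R} (ha : a ∈ I) (c : R) (hac : a * c ∈ I) :
    f ⟨a * c, hac⟩ = c • f ⟨a, ha⟩ := by
  rw [← map_smul]
  exact congrArg f (Subtype.ext (mul_comm a c))

theorem Module.Injective.smul_surjective {R E : Type u} [CommRing R] [AddCommGroup E]
    [Module R E] [Module.Injective R E] {r : R} (hr : r ∈ R⁰) :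
    Function.Surjective fun x : E => r • x := fun x => by
  obtain ⟨h, hh⟩ := Module.Injective.out (LinearMap.mulLeft R r)
    (fun a b hab => (mul_cancel_left_mem_nonZeroDivisors hr).mp hab)
    (LinearMap.toSpanSingleton R E x)
  refine ⟨h 1, ?_⟩
  simpa [← map_smul] using hh 1

theorem Module.Baer.of_injective_of_flat {R A W : Type u} [CommRing R] [CommRing A] [Algebra R A]
    [Module.Flat R A] [AddCommGroup W] [Module R W] [Module A W] [IsScalarTower R A W]
    [Module.Injective A W] : Module.Baer R W := by
  refine Module.Baer.iff_exists_smul.mpr fun I g => ?_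
  let ι : A ⊗[R] I →ₗ[A] A := (Algebra.linearMap R A ∘ₗ I.subtype).liftBaseChange A
  have hι : Function.Injective ι := by
    have : ι = (TensorProduct.AlgebraTensorModule.rid R A A).toLinearMap ∘ₗ
        I.subtype.baseChange A := by
      ext x; simp [ι, Algebra.algebraMap_eq_smul_one]
    rw [this]
    exact (TensorProduct.AlgebraTensorModule.rid R A A).injective.comp
      (Module.Flat.lTensor_preserves_injective_linearMap _ I.injective_subtype)
  obtain ⟨h, hh⟩ := Module.Injective.out ι hι (g.liftBaseChange A)
  refine ⟨h 1, fun x => ?_⟩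
  have := hh (1 ⊗ₜ x)
  simp only [ι, LinearMap.liftBaseChange_tmul, LinearMap.coe_comp, Function.comp_apply,
    Submodule.coe_subtype, Algebra.linearMap_apply, one_smul] at this
  rw [← this, ← algebraMap_smul A, ← map_smul, smul_eq_mul, mul_one]

theorem Module.smul_bijective_of_isUnit_algebraMap {R A N : Type*} [CommRing R] [CommRing A]
    [Algebra R A] [AddCommGroup N] [Module R N] [Module A N] [IsScalarTower R A N] {a : R}
    (ha : IsUnit (algebraMap R A a)) : Function.Bijective fun x : N => a • x := by
  simpa [algebraMap_smul] using ha.smul_bijective (β := N)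

section Torsion

variable {R : Type*} [CommRing R]

theorem Submodule.Quotient.torsion'_eq_zero_of_smul_eq_zero {M : Type*} [AddCommGroup M]
    [Module R M] {S : Submonoid R} {u : R} (hu : ∃ w, u * w ∈ S) {ξ : M ⧸ torsion' R M S}
    (h : u • ξ = 0) : ξ = 0 := by
  obtain ⟨w, hw⟩ := hu
  obtain ⟨x, rfl⟩ := Submodule.Quotient.mk_surjective _ ξ
  rw [← Submodule.Quotient.mk_smul, Submodule.Quotient.mk_eq_zero, mem_torsion'_iff] at h
  obtain ⟨⟨s, hs⟩, hsx⟩ := h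
  rw [Submodule.Quotient.mk_eq_zero, mem_torsion'_iff]
  refine ⟨⟨s * (u * w), S.mul_mem hs hw⟩, ?_⟩
  simp only [Submonoid.mk_smul] at hsx ⊢
  rw [show s * (u * w) = w * (s * u) by ring, mul_smul, mul_smul, hsx, smul_zero]

theorem Submodule.mem_torsion'_pi {ι : Type*} {M : ι → Type*} [∀ i, AddCommGroup (M i)]
    [∀ i, Module R (M i)] {S : Submonoid R} {B : Set ι} (hB : B.Finite) {x : ∀ i, M i} (s : S)
    (hout : ∀ i ∉ B, s • x i = 0) (hin : ∀ i ∈ B, x i ∈ torsion' R (M i) S) :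
    x ∈ torsion' R (∀ i, M i) S := by
  have : ∀ i, ∃ t : S, i ∈ B → t • x i = 0 := fun i => by
    by_cases hi : i ∈ B
    · obtain ⟨t, ht⟩ := (mem_torsion'_iff _ _).mp (hin i hi)
      exact ⟨t, fun _ => ht⟩
    · exact ⟨1, fun h => absurd h hi⟩
  choose t ht using this
  refine (mem_torsion'_iff _ _).mpr ⟨s * ∏ i ∈ hB.toFinset, t i, funext fun i => ?_⟩
  by_cases hi : i ∈ B
  · obtain ⟨k, hk⟩ := Finset.dvd_prod_of_mem t (hB.mem_toFinset.mpr hi)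
    simp [hk, mul_comm (t i), ← mul_assoc, mul_smul, ht i hi]
  · simp [mul_comm s, mul_smul, hout i hi]

theorem Submodule.isLocalizedModule_mkQ_torsion' {M : Type*} [AddCommGroup M] [Module R M]
    {S : Submonoid R} (hS : ∀ s : S, Function.Surjective fun m : M => s • m) :
    IsLocalizedModule S (torsion' R M S).mkQ where
  map_units s := by
    rw [Module.End.isUnit_iff]
    refine ⟨(injective_iff_map_eq_zero _).mpr fun ξ hξ => ?_, fun ξ => ?_⟩
    · exact Submodule.Quotient.torsion'_eq_zero_of_smul_eq_zero ⟨1, by simp⟩ hξ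
    · obtain ⟨x, rfl⟩ := Submodule.Quotient.mk_surjective _ ξ
      obtain ⟨y, rfl⟩ := hS s x
      exact ⟨Submodule.Quotient.mk y, rfl⟩
  surj ξ := by
    obtain ⟨x, rfl⟩ := Submodule.Quotient.mk_surjective _ ξ
    exact ⟨(x, 1), one_smul _ _⟩
  exists_of_eq {x y} h := by
    obtain ⟨c, hc⟩ := (mem_torsion'_iff _ _).mp ((Submodule.Quotient.eq _).mp h)
    exact ⟨c, by rwa [smul_sub, sub_eq_zero] at hc⟩

theorem Submodule.torsion'_le_comap {M N : Type*} [AddCommGroup M] [Module R M] [AddCommGroup N]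
    [Module R N] (S : Submonoid R) (f : M →ₗ[R] N) :
    torsion' R M S ≤ (torsion' R N S).comap f := fun x hx => by
  obtain ⟨s, hs⟩ := (mem_torsion'_iff _ _).mp hx
  refine (mem_torsion'_iff (R := R) _ _).mpr ⟨s, ?_⟩
  rw [Submonoid.smul_def, ← map_smul, ← Submonoid.smul_def, hs, map_zero]

theorem Submodule.torsion'_algebraMapSubmonoid_restrictScalars {A M : Type*} [CommRing A]
    [Algebra R A] [AddCommGroup M] [Module R M] [Module A M] [IsScalarTower R A M]
    (S : Submonoid R) :
    (torsion' A M (Algebra.algebraMapSubmonoid A S)).restrictScalars R = torsion' R M S := by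
  ext x
  simp only [restrictScalars_mem, mem_torsion'_iff]
  constructor
  · rintro ⟨⟨_, s, hs, rfl⟩, h⟩
    exact ⟨⟨s, hs⟩, by simpa [Submonoid.smul_def, algebraMap_smul] using h⟩
  · rintro ⟨s, h⟩
    exact ⟨⟨algebraMap R A s, s, s.2, rfl⟩,
      by simpa [Submonoid.smul_def, algebraMap_smul] using h⟩

end Torsion

section ChainRing

variable {V E : Type u} [CommRing V] [AddCommGroup E] [Module V E]

def Submonoid.notDvdIdeal [PreValuationRing V] (S : Submonoid V) (h0 : (0 : V) ∉ S) :
    Ideal V where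
  carrier := {v | ∀ w, v * w ∉ S}
  zero_mem' w := by simpa using h0
  add_mem' := by
    intro v₁ v₂ h₁ h₂ w
    rcases ValuationRing.dvd_total v₁ v₂ with ⟨c, rfl⟩ | ⟨c, rfl⟩
    · rw [show (v₁ + v₁ * c) * w = v₁ * ((1 + c) * w) by ring]; exact h₁ _
    · rw [show (v₂ * c + v₂) * w = v₂ * ((c + 1) * w) by ring]; exact h₂ _
  smul_mem' c v h w := by simpa [mul_assoc, mul_left_comm] using h (c * w)

theorem Submonoid.smul_eq_zero_of_mem_notDvdIdeal [PreValuationRing V] {S : Submonoid V}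
    {h0 : (0 : V) ∉ S} {q : V} (hq : q ∈ S.notDvdIdeal h0) {x : E}
    (hx : x ∈ torsion' V E S) : q • x = 0 := by
  obtain ⟨⟨s, hs⟩, hsx⟩ := (mem_torsion'_iff _ _).mp hx
  rcases ValuationRing.dvd_total s q with ⟨c, rfl⟩ | ⟨c, rfl⟩
  · rw [mul_comm, mul_smul]; simpa using congrArg (c • ·) hsx
  · exact absurd hs (hq c)

variable [IsDomain V] [ValuationRing V]

theorem Ideal.flat_of_valuationRing (J : Ideal V) : Module.Flat V J :=
  Module.Flat.flat_iff_torsion_eq_bot_of_isBezout.mpr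
    (Submodule.isTorsionFree_iff_torsion_eq_bot.mp inferInstance)

variable [Module.Injective V E] {S : Submonoid V}

theorem exists_forall_notDvdIdeal_smul_eq_zero {h0 : (0 : V) ∉ S} (J : Ideal V)
    (f : J →ₗ[V] E ⧸ torsion' V E S) :
    ∃ ζ : E ⧸ torsion' V E S,
      ∀ q ∈ S.notDvdIdeal h0, ∀ a : J, q • ((a : V) • ζ - f a) = 0 := by
  set p := S.notDvdIdeal h0
  choose e he using fun a => Submodule.Quotient.mk_surjective _ (f a)
  have hkill : ∀ q ∈ p, ∀ x y : E, Submodule.Quotient.mk (p := torsion' V E S) x =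
      Submodule.Quotient.mk y → q • x = q • y := by
    intro q hq x y hxy
    rw [← sub_eq_zero, ← smul_sub]
    exact Submonoid.smul_eq_zero_of_mem_notDvdIdeal hq ((Submodule.Quotient.eq _).mp hxy)
  -- `e` is additive and linear up to torsion, which `p` kills: `(q, b) ↦ q • e b` is bilinear.
  let Φ : p →ₗ[V] J →ₗ[V] E := LinearMap.mk₂ V (fun q b => (q : V) • e b)
    (fun _ _ _ => add_smul _ _ _) (fun _ _ _ => mul_smul _ _ _)
    (fun q _ _ => by rw [← smul_add]; exact hkill q q.2 _ _ (by simp [he]))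
    (fun _ q _ => by rw [smul_comm]; exact hkill q q.2 _ _ (by simp [he]))
  let μ : p ⊗[V] J →ₗ[V] V :=
    J.subtype ∘ₗ TensorProduct.lift ((LinearMap.lsmul V J).comp p.subtype)
  have hμ : Function.Injective μ := by
    have := J.flat_of_valuationRing
    refine J.injective_subtype.comp ?_
    rw [← LinearMap.lid_comp_rTensor]
    exact (TensorProduct.lid V J).injective.comp
      (Module.Flat.rTensor_preserves_injective_linearMap _ p.injective_subtype)
  obtain ⟨h, hh⟩ := Module.Injective.out μ hμ (TensorProduct.lift Φ)
  refine ⟨Submodule.Quotient.mk (h 1), fun q hq a => ?_⟩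
  have hqa : (q * a) • h 1 = q • e a := by
    simpa [μ, Φ, ← map_smul] using hh (⟨q, hq⟩ ⊗ₜ a)
  rw [← he, ← Submodule.Quotient.mk_smul, ← Submodule.Quotient.mk_sub,
    ← Submodule.Quotient.mk_smul, smul_sub, smul_smul, hqa, sub_self, Submodule.Quotient.mk_zero]

theorem Module.Injective.quotient_torsion'_of_valuationRing (h0 : (0 : V) ∉ S) :
    Module.Injective V (E ⧸ torsion' V E S) := by
  refine (Module.Baer.iff_exists_smul.mpr fun J f => ?_).injective
  by_cases hJ : ∀ a ∈ J, ∃ q ∈ S.notDvdIdeal h0, ∃ b ∈ J, a = q * b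
  · obtain ⟨ζ, hζ⟩ := exists_forall_notDvdIdeal_smul_eq_zero (h0 := h0) J f
    refine ⟨ζ, fun ⟨a, ha⟩ => ?_⟩
    obtain ⟨q, hq, b, hb, rfl⟩ := hJ a ha
    have hqb := hζ q hq ⟨b, hb⟩
    rw [smul_sub, sub_eq_zero, ← map_smul] at hqb
    rw [mul_smul, hqb]
    rfl
  -- Some `a₀ ∈ J` lies outside `p J`: each `a ∈ J` is then a multiple of `a₀`,
  -- or `a₀ = a c` with `c ∉ p`, and such `c` act injectively on `E ⧸ T`.
  push Not at hJ
  obtain ⟨a₀, ha₀, hgen⟩ := hJ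
  have ha₀0 : a₀ ≠ 0 := fun h => hgen 0 (zero_mem _) a₀ ha₀ (by simp [h])
  obtain ⟨x, hx⟩ := Submodule.Quotient.mk_surjective _ (f ⟨a₀, ha₀⟩)
  obtain ⟨y, hy⟩ := Module.Injective.smul_surjective (mem_nonZeroDivisors_of_ne_zero ha₀0) x
  have hζ : a₀ • Submodule.Quotient.mk (p := torsion' V E S) y = f ⟨a₀, ha₀⟩ := by
    rw [← Submodule.Quotient.mk_smul, ← hx]
    exact congrArg _ hy
  refine ⟨Submodule.Quotient.mk y, fun ⟨a, ha⟩ => ?_⟩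
  show f ⟨a, ha⟩ = a • _
  rcases ValuationRing.dvd_total a₀ a with ⟨c, rfl⟩ | ⟨c, rfl⟩
  · rw [f.map_ideal_mul ha₀ c ha, ← hζ, smul_smul, mul_comm]
  · have hc : ∃ w, c * w ∈ S := by
      by_contra! hc
      exact hgen c hc a ha (mul_comm _ _)
    refine sub_eq_zero.mp (Submodule.Quotient.torsion'_eq_zero_of_smul_eq_zero hc ?_)
    rw [smul_sub, smul_smul, mul_comm, hζ, ← f.map_ideal_mul ha c ha₀, sub_self]

end ChainRing

theorem Module.Baer.quotient_torsion'_of_valuationRing {R A M : Type u} [CommRing R] [CommRing A]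
    [IsDomain A] [ValuationRing A] [Algebra R A] [Module.Flat R A] [AddCommGroup M] [Module R M]
    [Module A M] [IsScalarTower R A M] [Module.Injective A M] (S : Submonoid R)
    (h0 : (0 : A) ∉ Algebra.algebraMapSubmonoid A S) :
    Module.Baer R (M ⧸ torsion' R M S) := by
  have := Module.Injective.quotient_torsion'_of_valuationRing (E := M) h0
  exact (Module.Baer.of_injective_of_flat (A := A)
    (W := M ⧸ torsion' A M (Algebra.algebraMapSubmonoid A S))).of_equiv
    ((Submodule.Quotient.restrictScalarsEquiv R _).symm.trans (Submodule.quotEquivOfEq _ _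
      (torsion'_algebraMapSubmonoid_restrictScalars S)))

theorem Module.Baer.pi_quotient_torsion' {R : Type*} [CommRing R] {ι : Type*} {M : ι → Type*}
    [∀ i, AddCommGroup (M i)] [∀ i, Module R (M i)] (S : Submonoid R)
    (hloc : ∀ i, Module.Baer R (M i ⧸ torsion' R (M i) S))
    (hfin : ∀ a : R, a ≠ 0 → {i | ¬ Function.Bijective fun m : M i => a • m}.Finite) :
    Module.Baer R ((∀ i, M i) ⧸ torsion' R (∀ i, M i) S) := by
  refine Module.Baer.iff_exists_smul.mpr fun J f => ?_
  by_cases hJ : J = ⊥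
  · subst hJ
    refine ⟨0, fun a => ?_⟩
    rw [smul_zero, show a = 0 from Subtype.ext ((Submodule.mem_bot R).mp a.2), map_zero]
  obtain ⟨a₀, ha₀, ha₀0⟩ := (Submodule.ne_bot_iff J).mp hJ
  set B := {i | ¬ Function.Bijective fun m : M i => a₀ • m}
  let π i := (torsion' R (∀ i, M i) S).mapQ _ (LinearMap.proj i) (torsion'_le_comap S _)
  obtain ⟨y, hy⟩ := Submodule.Quotient.mk_surjective _ (f ⟨a₀, ha₀⟩)
  have : ∀ i, ∃ z : M i,
      (i ∈ B → ∀ a : J, π i (f a) = (a : R) • Submodule.Quotient.mk z) ∧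
      (i ∉ B → a₀ • z = y i) := fun i => by
    by_cases hi : i ∈ B
    · obtain ⟨ζ, hζ⟩ := Module.Baer.iff_exists_smul.mp (hloc i) J (π i ∘ₗ f)
      obtain ⟨z, rfl⟩ := Submodule.Quotient.mk_surjective _ ζ
      exact ⟨z, fun _ => hζ, fun h => absurd hi h⟩
    · obtain ⟨z, hz⟩ := (not_not.mp hi).surjective (y i)
      exact ⟨z, fun h => absurd h hi, fun _ => hz⟩
  choose z hzB hzB' using this
  refine ⟨Submodule.Quotient.mk z, fun a => ?_⟩
  obtain ⟨x, hx⟩ := Submodule.Quotient.mk_surjective _ (f a)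
  have hglob : a₀ • x - (a : R) • y ∈ torsion' R (∀ i, M i) S := by
    rw [← Submodule.Quotient.mk_eq_zero, Submodule.Quotient.mk_sub, Submodule.Quotient.mk_smul,
      Submodule.Quotient.mk_smul, hx, hy, ← map_smul, ← map_smul, sub_eq_zero]
    exact congrArg f (Subtype.ext (mul_comm _ _))
  obtain ⟨s, hs⟩ := (mem_torsion'_iff _ _).mp hglob
  rw [← hx, ← Submodule.Quotient.mk_smul, Submodule.Quotient.eq]
  refine mem_torsion'_pi (hfin a₀ ha₀0) s (fun i hi => (not_not.mp hi).injective ?_)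
    fun i hi => ?_
  · have := congrFun hs i
    simp only [Pi.smul_apply, Pi.sub_apply, ← hzB' i hi] at this
    simpa [smul_sub, smul_comm a₀] using this
  · have := hzB i hi a
    rw [← hx] at this
    show x i - (a : R) • z i ∈ _
    rw [← Submodule.Quotient.eq, Submodule.Quotient.mk_smul]
    exact this

theorem FiniteCharacter.finite_setOf_mem {R : Type u} [CommRing R] (hfc : FiniteCharacter R)
    {a : R} (ha : a ≠ 0) : {P : MaximalSpectrum R | a ∈ P.asIdeal}.Finite :=
  (hfc a ha).preimage (fun _ _ _ _ h => MaximalSpectrum.ext h) |>.subset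
    fun P hP => ⟨P.isMaximal, hP⟩

/-- Let `R` be a Prüfer domain of finite character and, for each maximal
ideal `P`, let `F P` be an injective `R_P`-module; let `F = ∏_P F P`.  Then `S⁻¹F` is an
injective `R`-module for every multiplicative subset `S` of `R`. -/
theorem localization_injective_of_pi_of_injective (R : Type u) [CommRing R] [IsDomain R]
    (hprufer : IsArithmetical R) (hfc : FiniteCharacter R)
    (F : MaximalSpectrum R → Type u)
    [∀ P, AddCommGroup (F P)] [∀ P, Module R (F P)]
    [∀ P, Module (Localization.AtPrime P.asIdeal) (F P)]
    [∀ P, IsScalarTower R (Localization.AtPrime P.asIdeal) (F P)]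
    (hinj : ∀ P, Module.Injective (Localization.AtPrime P.asIdeal) (F P))
    (S : Submonoid R) :
    Module.Injective R (LocalizedModule S (∀ P, F P)) := by
  by_cases h0 : (0 : R) ∈ S
  · have := LocalizedModule.subsingleton (M := ∀ P, F P) h0
    exact ⟨fun _ _ _ _ _ _ _ _ _ => ⟨0, fun _ => Subsingleton.elim _ _⟩⟩
  have hS0 : ∀ P : MaximalSpectrum R,
      (0 : Localization.AtPrime P.asIdeal) ∉ Algebra.algebraMapSubmonoid _ S := by
    rintro P ⟨s, hs, hs0⟩
    exact h0 (IsLocalization.injective _ P.asIdeal.primeCompl_le_nonZeroDivisors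
      (hs0.trans (map_zero _).symm) ▸ hs)
  have hloc : ∀ P, Module.Baer R (F P ⧸ torsion' R (F P) S) := fun P => by
    have := hinj P
    have := ValuationRing.iff_ideal_total.mpr ⟨hprufer P.asIdeal P.isMaximal⟩
    exact Module.Baer.quotient_torsion'_of_valuationRing (A := Localization.AtPrime P.asIdeal) S
      (hS0 P)
  have hS : ∀ s : S, Function.Surjective fun x : (∀ P, F P) => s • x := fun s x => by
    have hs (P : MaximalSpectrum R) : algebraMap R (Localization.AtPrime P.asIdeal) s ∈ _⁰ :=
      mem_nonZeroDivisors_of_ne_zero fun h => hS0 P (h ▸ Algebra.mem_algebraMapSubmonoid_of_mem s)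
    choose y hy using fun P => (hinj P).smul_surjective (hs P) (x P)
    exact ⟨y, funext fun P => by simpa [Submonoid.smul_def, algebraMap_smul] using hy P⟩
  have hfin (a : R) (ha : a ≠ 0) : {P | ¬ Function.Bijective fun x : F P => a • x}.Finite :=
    (hfc.finite_setOf_mem ha).subset fun P hP => by_contra fun haP => hP <|
      Module.smul_bijective_of_isUnit_algebraMap <|
        IsLocalization.map_units (Localization.AtPrime P.asIdeal)
          (⟨a, haP⟩ : P.asIdeal.primeCompl)
  have := Submodule.isLocalizedModule_mkQ_torsion' hS
  exact ((Module.Baer.pi_quotient_torsion' S hloc hfin).of_equiv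
    (IsLocalizedModule.iso S (torsion' R (∀ P, F P) S).mkQ).symm).injective
end
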